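/- arXiv:math/9709214 — 4 statements merged into one kernel-verified Lean document; each statement's English description precedes it below -/
import Mathlib

section
/- Let $k \ge 1$ be an integer and $p = 2k$. If $f_1, \dots, f_n \in L_p[0,1]$ are independent symmetric random variables and $f = \sum_{j=1}^n f_j$, then $\|f\|_p^p = \sum_{k_1 + \cdots + k_n = k,\; k_j \ge 0} \frac{(2k)!}{(2k_1)! \cdots (2k_n)!} \prod_{j=1}^n \|f_j\|_{2k_j}^{2k_j}$, with the convention $\|f_j\|_0^0 = 1$. In particular, $\|f\|_p$ depends only on the values $\|f_j\|_{2m}$ for $1 \le m \le k$, $1 \le j \le n$. -/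
/-!
Expand `(∑ fⱼ)^(2k)` by the multinomial theorem. A monomial `∏ fⱼ^mⱼ` with `∑ mⱼ = 2k` is
integrable by Hölder's inequality, and by independence its integral is the product of the
moments `∫ fⱼ^mⱼ`. Symmetry makes every odd moment vanish, so only the tuples `m = 2c` survive.
-/

open MeasureTheory ProbabilityTheory Finset
open scoped ENNReal NNReal

/-- The probability space `[0,1]` with Lebesgue measure. -/
noncomputable def mu01 : MeasureTheory.Measure ℝ :=
  MeasureTheory.volume.restrict (Set.Icc (0 : ℝ) 1)

section Moments

variable {Ω : Type*} {mΩ : MeasurableSpace Ω} {μ : Measure Ω}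

lemma integral_pow_eq_zero_of_map_neg_eq {X : Ω → ℝ} (hX : AEMeasurable X μ)
    (hsymm : μ.map X = μ.map (fun ω => -X ω)) {m : ℕ} (hm : Odd m) :
    ∫ ω, X ω ^ m ∂μ = 0 := by
  have hpow : AEStronglyMeasurable (fun y : ℝ => y ^ m) (μ.map X) :=
    (continuous_pow m).aestronglyMeasurable
  have hflip : ∫ ω, X ω ^ m ∂μ = -∫ ω, X ω ^ m ∂μ :=
    calc ∫ ω, X ω ^ m ∂μ = ∫ y, y ^ m ∂(μ.map X) := (integral_map hX hpow).symm
      _ = ∫ y, y ^ m ∂(μ.map (fun ω => -X ω)) := by rw [hsymm]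
      _ = ∫ ω, (-X ω) ^ m ∂μ := integral_map hX.neg (hsymm ▸ hpow)
      _ = -∫ ω, X ω ^ m ∂μ := by simp only [hm.neg_pow, integral_neg]
  linarith

lemma MeasureTheory.MemLp.pow_div {X : Ω → ℝ} {p : ℝ≥0∞} (hX : MemLp X p μ) (m : ℕ) :
    MemLp (fun ω => X ω ^ m) (p / m) μ := by
  have hnorm := hX.norm_rpow_div m
  simp only [ENNReal.toReal_natCast, Real.rpow_natCast, ← norm_pow] at hnorm
  exact (memLp_norm_iff (hX.aestronglyMeasurable.pow m)).1 hnorm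

/-- Hölder's inequality with exponents `p / mᵢ`, whose reciprocals sum to `1`. -/
lemma integrable_prod_pow_of_memLp [IsFiniteMeasure μ] {ι : Type*} {s : Finset ι}
    {X : ι → Ω → ℝ} {p : ℕ} (hX : ∀ i ∈ s, MemLp (X i) p μ) {m : ι → ℕ}
    (hm : ∑ i ∈ s, m i = p) :
    Integrable (fun ω => ∏ i ∈ s, X i ω ^ m i) μ := by
  rcases eq_or_ne p 0 with rfl | hp
  · have hm0 : ∀ i ∈ s, m i = 0 := sum_eq_zero_iff.1 hm
    have hone : (fun ω => ∏ i ∈ s, X i ω ^ m i) = fun _ => 1 :=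
      funext fun ω => prod_eq_one fun i hi => by rw [hm0 i hi, pow_zero]
    exact hone ▸ integrable_const 1
  have hexp : (∑ i ∈ s, ((p : ℝ≥0∞) / m i)⁻¹)⁻¹ = 1 := by
    simp_rw [ENNReal.inv_div (.inl (ENNReal.natCast_ne_top _)) (.inr (Nat.cast_ne_zero.2 hp)),
      div_eq_mul_inv, ← sum_mul, ← Nat.cast_sum, hm, ← div_eq_mul_inv,
      ENNReal.div_self (Nat.cast_ne_zero.2 hp) (ENNReal.natCast_ne_top _), inv_one]
  rw [← memLp_one_iff_integrable, ← hexp]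
  exact MemLp.prod' fun i hi => (hX i hi).pow_div (m i)

lemma ProbabilityTheory.iIndepFun.integral_sum_pow {ι : Type*} [Fintype ι] [DecidableEq ι]
    {X : ι → Ω → ℝ} (hX : iIndepFun X μ) {p : ℕ} (hLp : ∀ i, MemLp (X i) p μ) :
    ∫ ω, (∑ i, X i ω) ^ p ∂μ
      = ∑ m ∈ piAntidiag univ p, (Nat.multinomial univ m : ℝ) * ∏ i, ∫ ω, X i ω ^ m i ∂μ := by
  have := hX.isProbabilityMeasure
  simp_rw [sum_pow_eq_sum_piAntidiag]
  rw [integral_finsetSum]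
  · refine sum_congr rfl fun m _ => ?_
    rw [integral_const_mul, hX.integral_fun_prod_comp (f := fun i y => y ^ m i)
      (fun i => (hLp i).aestronglyMeasurable.aemeasurable)
      (fun i => (continuous_pow (m i)).aestronglyMeasurable)]
  · intro m hm
    exact (integrable_prod_pow_of_memLp (fun i _ => hLp i) (mem_piAntidiag.1 hm).1).const_mul _

end Moments

lemma sum_piAntidiag_two_mul_of_odd {ι M : Type*} [Fintype ι] [DecidableEq ι] [AddCommMonoid M]
    {F : (ι → ℕ) → M} (hF : ∀ m i, Odd (m i) → F m = 0) (k : ℕ) :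
    ∑ m ∈ piAntidiag univ (2 * k), F m = ∑ c ∈ piAntidiag univ k, F (fun i => 2 * c i) := by
  have hdvd : ∀ m ∈ piAntidiag univ (2 * k), F m ≠ 0 → ∀ i, 2 ∣ m i := fun m _ hm i =>
    even_iff_two_dvd.1 (Nat.not_odd_iff_even.1 fun hi => hm (hF m i hi))
  rw [← sum_filter_of_ne hdvd, ← map_nsmul_piAntidiag_univ k two_ne_zero, sum_map]
  rfl

theorem sum_indep_symm_even_power_general (k n : ℕ)
    (f : Fin n → ℝ → ℝ)
    (hLp : ∀ j, MemLp (f j) ((2 * k : ℕ) : ℝ≥0∞) mu01)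
    (hindep : iIndepFun f mu01)
    (hsymm : ∀ j, mu01.map (f j) = mu01.map (fun x => - f j x)) :
    ∫ x, (∑ j, f j x) ^ (2 * k) ∂mu01
      = ∑ c ∈ Finset.Nat.antidiagonalTuple n k,
          (Nat.multinomial Finset.univ (fun j => 2 * c j) : ℝ)
            * ∏ j, ∫ x, (f j x) ^ (2 * c j) ∂mu01 := by
  have hodd : ∀ (m : Fin n → ℕ) j, Odd (m j) →
      (Nat.multinomial univ m : ℝ) * ∏ i, ∫ x, f i x ^ m i ∂mu01 = 0 := fun m j hj => by
    rw [prod_eq_zero (mem_univ j)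
      (integral_pow_eq_zero_of_map_neg_eq (hLp j).aestronglyMeasurable.aemeasurable
        (hsymm j) hj), mul_zero]
  rw [hindep.integral_sum_pow hLp, sum_piAntidiag_two_mul_of_odd hodd,
    piAntidiag_univ_fin_eq_antidiagonalTuple]

/-- **Lemma 1 (Lemma `sum`).** If `p = 2k` and `f₁, …, fₙ` are independent symmetric random
variables on `[0,1]`, then the `p`-th power of the `Lp`-norm of `f = ∑ fⱼ` is given by the
multinomial formula
`‖f‖_p^p = ∑_{k₁+⋯+kₙ=k} (2k)!/((2k₁)!⋯(2kₙ)!) ∏ⱼ ‖fⱼ‖_{2kⱼ}^{2kⱼ}`. -/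
theorem sum_indep_symm_even_power (k n : ℕ) (hk : 1 ≤ k)
    (f : Fin n → ℝ → ℝ)
    (hmeas : ∀ j, Measurable (f j))
    (hLp : ∀ j, MemLp (f j) ((2 * k : ℕ) : ℝ≥0∞) mu01)
    (hindep : iIndepFun f mu01)
    (hsymm : ∀ j, mu01.map (f j) = mu01.map (fun x => - f j x)) :
    ∫ x, (∑ j, f j x) ^ (2 * k) ∂mu01
      = ∑ c ∈ Finset.Nat.antidiagonalTuple n k,
          (Nat.multinomial Finset.univ (fun j => 2 * c j) : ℝ)
            * ∏ j, ∫ x, (f j x) ^ (2 * c j) ∂mu01 :=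
  sum_indep_symm_even_power_general k n f hLp hindep hsymm
end

section
/- Let $k \ge 1$, fix $j \in \mathbb{N}$, and let $g_{j,1}, \dots, g_{j,k}$ be independent symmetric random variables on $[0,1]$ taking only the values $-1, 0, 1$, with $\int |g_{j,i}| = \mu_i$ for $i = 1, \dots, k$. Set $h_j = \sum_{i=1}^k g_{j,i}$. Then for every integer $m$ with $1 \le m \le k$: $\|h_j\|_{2m}^{2m} = H_m(\mu_1, \dots, \mu_k)$. -/
/-!
Expand `(∑ gᵢ)^(2m)` by the multinomial theorem; by independence the term with exponent vector
`d` integrates to `multinomial d * ∏ ∫ gᵢ^dᵢ`. Symmetry kills every `d` with an odd entry, and a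
`{-1, 0, 1}`-valued variable has all positive even moments equal to `∫ |gᵢ| = μᵢ`. So `d = 2c`
contributes `multinomial (2c) * ∏_{cᵢ ≠ 0} μᵢ`, and grouping the vectors `c` by their support `S`
produces the coefficient `C_{m,|S|}`.
-/

open MeasureTheory ProbabilityTheory Finset
open scoped ENNReal NNReal

/-- `Ccoef m α = C_{m,α} = ∑_{n₁+⋯+n_α = m, nᵢ ≥ 1} (2m)! / ((2n₁)! ⋯ (2n_α)!)`. -/
def Ccoef (m α : ℕ) : ℕ :=
  ∑ c ∈ (Finset.Nat.antidiagonalTuple α m).filter (fun c => ∀ i, 1 ≤ c i),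
    Nat.multinomial Finset.univ (fun i => 2 * c i)

/-- The polynomial `H_m(μ₁, …, μ_k) = ∑_{α=1}^m ∑_{S ⊆ {1,…,k}, |S| = α} C_{m,α} ∏_{i∈S} μᵢ`,
with the convention `H₀ = 1` (the `α = 0` term of the sum below vanishes unless `m = 0`,
in which case it equals `1`). -/
def Hpoly (k m : ℕ) (μ : Fin k → ℝ) : ℝ :=
  ∑ α ∈ Finset.range (m + 1), ∑ S ∈ Finset.univ.powersetCard α,
    (Ccoef m α : ℝ) * ∏ i ∈ S, μ i

@[to_additive]
lemma Finset.prod_equivFin_symm {ι M : Type*} [CommMonoid M] (S : Finset ι) (f : ι → M) :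
    ∏ j, f (S.equivFin.symm j) = ∏ i ∈ S, f i := by
  rw [Equiv.prod_comp S.equivFin.symm (fun i : S => f i), prod_coe_sort]

section Combinatorics

variable {ι : Type*} [Fintype ι] [DecidableEq ι]

lemma Nat.multinomial_comp_equivFin_symm (S : Finset ι) {f : ι → ℕ} (hf : ∀ i ∉ S, f i = 0) :
    Nat.multinomial univ (fun j => f (S.equivFin.symm j)) = Nat.multinomial univ f := by
  rw [← Nat.multinomial_congr_of_sdiff (subset_univ S) (fun i hi => hf i (mem_sdiff.1 hi).2)
    fun _ _ => rfl]
  simp only [Nat.multinomial, sum_equivFin_symm, prod_equivFin_symm S fun i => (f i).factorial]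

lemma sum_multinomial_two_nsmul_of_support_eq (m : ℕ) (S : Finset ι) :
    ∑ c ∈ piAntidiag univ m with ({i | c i ≠ 0} : Finset ι) = S, Nat.multinomial univ (2 • c)
      = Ccoef m #S := by
  have hsupp (c : ι → ℕ) : ({i | c i ≠ 0} : Finset ι) = S ↔ ∀ i, c i ≠ 0 ↔ i ∈ S := by
    simp [Finset.ext_iff]
  rw [Ccoef, ← piAntidiag_univ_fin_eq_antidiagonalTuple]
  refine sum_nbij' (fun c j => c (S.equivFin.symm j))
    (fun b i => if h : i ∈ S then b (S.equivFin ⟨i, h⟩) else 0) ?_ ?_ ?_ ?_ ?_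
  · intro c hc
    simp only [mem_filter, mem_piAntidiag, hsupp] at hc ⊢
    obtain ⟨⟨hsum, -⟩, hS⟩ := hc
    refine ⟨⟨?_, by simp⟩, fun j => Nat.one_le_iff_ne_zero.2 ((hS _).2 (S.equivFin.symm j).2)⟩
    rw [sum_equivFin_symm, ← hsum]
    exact sum_subset (subset_univ S) fun i _ hi => not_not.1 (mt (hS i).1 hi)
  · intro b hb
    simp only [mem_filter, mem_piAntidiag] at hb ⊢
    obtain ⟨⟨hsum, -⟩, hpos⟩ := hb
    refine ⟨⟨?_, by simp⟩, (hsupp _).2 fun i => ?_⟩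
    · rw [← sum_subset (subset_univ S) fun i _ hi => dif_neg hi, ← sum_equivFin_symm]
      simpa using hsum
    · by_cases hi : i ∈ S
      · simpa [hi] using Nat.one_le_iff_ne_zero.1 (hpos _)
      · simp [hi]
  · intro c hc
    obtain ⟨-, hS⟩ := mem_filter.1 hc
    funext i
    by_cases hi : i ∈ S
    · simp [hi]
    · simpa [hi, eq_comm] using mt ((hsupp c).1 hS i).1 hi
  · intro b _
    funext j
    simp
  · intro c hc
    obtain ⟨-, hS⟩ := mem_filter.1 hc
    exact (Nat.multinomial_comp_equivFin_symm S fun i hi => by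
      simpa using mt ((hsupp c).1 hS i).1 hi).symm

lemma sum_piAntidiag_mul_eq_sum_nsmul {M : Type*} [AddCommMonoid M] {n : ℕ} (hn : n ≠ 0)
    (m : ℕ) (F : (ι → ℕ) → M) (hF : ∀ d, (∃ i, ¬ n ∣ d i) → F d = 0) :
    ∑ d ∈ piAntidiag univ (n * m), F d = ∑ c ∈ piAntidiag univ m, F (n • c) := by
  rw [← sum_filter_of_ne (p := fun d => ∀ i, n ∣ d i)
    fun d _ hd => not_exists_not.1 (mt (hF d) hd), ← map_nsmul_piAntidiag_univ m hn, sum_map]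
  rfl

end Combinatorics

lemma Ccoef_eq_zero_of_lt {m α : ℕ} (h : m < α) : Ccoef m α = 0 := by
  refine sum_eq_zero fun c hc => absurd ?_ h.not_ge
  obtain ⟨hsum, hpos⟩ := mem_filter.1 hc
  rw [Nat.mem_antidiagonalTuple] at hsum
  calc α = ∑ _i : Fin α, 1 := by simp
    _ ≤ ∑ i, c i := sum_le_sum fun i _ => hpos i
    _ = m := hsum

lemma Hpoly_eq_sum_powerset (k m : ℕ) (μ : Fin k → ℝ) :
    Hpoly k m μ = ∑ S ∈ (univ : Finset (Fin k)).powerset, (Ccoef m #S : ℝ) * ∏ i ∈ S, μ i := by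
  set T : ℕ → ℝ := fun α => ∑ S ∈ univ.powersetCard α, (Ccoef m α : ℝ) * ∏ i ∈ S, μ i
  calc Hpoly k m μ = ∑ α ∈ range (m + k + 1), T α := by
        refine sum_subset (range_subset_range.2 (by omega)) fun α hα hαm => ?_
        rw [mem_range] at hα hαm
        simp [Ccoef_eq_zero_of_lt (show m < α by omega)]
    _ = ∑ α ∈ range (k + 1), T α := by
        refine (sum_subset (range_subset_range.2 (by omega)) fun α hα hαk => ?_).symm
        rw [mem_range] at hαk
        simp [T, powersetCard_eq_empty.2 (show (univ : Finset (Fin k)).card < α by simp; omega)]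
    _ = _ := by
        rw [sum_powerset, card_univ, Fintype.card_fin]
        refine sum_congr rfl fun α _ => Finset.sum_congr rfl fun S hS => ?_
        rw [(mem_powersetCard.1 hS).2]

lemma Hpoly_eq_sum_piAntidiag (k m : ℕ) (μ : Fin k → ℝ) :
    Hpoly k m μ = ∑ c ∈ piAntidiag (univ : Finset (Fin k)) m,
      (Nat.multinomial univ (2 • c) : ℝ) * ∏ i ∈ {i | c i ≠ 0}, μ i := by
  rw [Hpoly_eq_sum_powerset, ← sum_fiberwise_of_maps_to (t := univ.powerset)
    (g := fun c : Fin k → ℕ => ({i | c i ≠ 0} : Finset (Fin k)))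
    fun _ _ => mem_powerset.2 (subset_univ _)]
  refine sum_congr rfl fun S _ => ?_
  rw [← sum_multinomial_two_nsmul_of_support_eq m S, Nat.cast_sum, sum_mul]
  exact sum_congr rfl fun c hc => by rw [(mem_filter.1 hc).2]

section Moments

variable {Ω : Type*} [MeasurableSpace Ω] {μ : Measure Ω}

lemma integral_pow_eq_zero_of_map_neg {f : Ω → ℝ} (hf : AEMeasurable f μ)
    (hsymm : μ.map f = μ.map (fun ω => -f ω)) {d : ℕ} (hd : Odd d) :
    ∫ ω, f ω ^ d ∂μ = 0 := by
  have h := congrArg (fun ν => ∫ y, y ^ d ∂ν) hsymm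
  rw [integral_map hf (by fun_prop), integral_map (φ := fun ω => -f ω) hf.neg (by fun_prop)] at h
  simp only [hd.neg_pow, integral_neg] at h
  linarith

lemma pow_two_mul_eq_abs_of_mem {x : ℝ} (hx : x ∈ ({-1, 0, 1} : Set ℝ)) {n : ℕ} (hn : n ≠ 0) :
    x ^ (2 * n) = |x| := by
  rcases hx with rfl | rfl | rfl <;> simp [pow_mul, hn]

lemma integral_sum_pow_eq_sum_piAntidiag {ι : Type*} [Fintype ι] [DecidableEq ι]
    {g : ι → Ω → ℝ} (hindep : iIndepFun g μ) (hmeas : ∀ i, AEMeasurable (g i) μ) {C : ℝ}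
    (hbdd : ∀ i ω, |g i ω| ≤ C) (n : ℕ) :
    ∫ ω, (∑ i, g i ω) ^ n ∂μ
      = ∑ d ∈ piAntidiag univ n, (Nat.multinomial univ d : ℝ) * ∏ i, ∫ ω, g i ω ^ d i ∂μ := by
  have := hindep.isProbabilityMeasure
  have hint (d : ι → ℕ) : Integrable (fun ω => ∏ i, g i ω ^ d i) μ := by
    refine .of_bound (aemeasurable_fun_prod _ fun i _ => (hmeas i).pow_const _).aestronglyMeasurable
      (∏ i, C ^ d i) (.of_forall fun ω => ?_)
    rw [Real.norm_eq_abs, abs_prod]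
    exact prod_le_prod (fun i _ => abs_nonneg _) fun i _ => by
      rw [abs_pow]; exact pow_le_pow_left₀ (abs_nonneg _) (hbdd i ω) _
  simp_rw [sum_pow_eq_sum_piAntidiag]
  rw [integral_finsetSum _ fun d _ => (hint d).const_mul _]
  refine sum_congr rfl fun d _ => ?_
  rw [integral_const_mul,
    hindep.integral_fun_prod_comp hmeas fun i => (continuous_pow (d i)).aestronglyMeasurable]

end Moments

theorem norm_sum_three_valued_general (k : ℕ)
    (μvec : Fin k → ℝ) (g : Fin k → ℝ → ℝ)
    (hmeas : ∀ i, Measurable (g i))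
    (hval : ∀ i x, g i x ∈ ({-1, 0, 1} : Set ℝ))
    (hindep : iIndepFun g mu01)
    (hsymm : ∀ i, mu01.map (g i) = mu01.map (fun x => - g i x))
    (habs : ∀ i, ∫ x, |g i x| ∂mu01 = μvec i)
    (m : ℕ) :
    ∫ x, (∑ i, g i x) ^ (2 * m) ∂mu01 = Hpoly k m μvec := by
  have := hindep.isProbabilityMeasure
  have hbdd (i : Fin k) (x : ℝ) : |g i x| ≤ 1 := by
    rcases hval i x with h | h | (h : g i x = 1) <;> norm_num [h]
  have hmoment (i : Fin k) (n : ℕ) :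
      ∫ x, g i x ^ (2 * n) ∂mu01 = if n ≠ 0 then μvec i else 1 := by
    split_ifs with hn
    · rw [← habs, integral_congr_ae (.of_forall fun x => pow_two_mul_eq_abs_of_mem (hval i x) hn)]
    · simp [not_not.1 hn]
  rw [integral_sum_pow_eq_sum_piAntidiag hindep (fun i => (hmeas i).aemeasurable) hbdd,
    sum_piAntidiag_mul_eq_sum_nsmul two_ne_zero, Hpoly_eq_sum_piAntidiag]
  · simp only [Pi.smul_apply, smul_eq_mul, hmoment, prod_filter]
  · rintro d ⟨i, hi⟩
    rw [prod_eq_zero (mem_univ i) (integral_pow_eq_zero_of_map_neg (hmeas i).aemeasurable (hsymm i)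
      (Nat.odd_iff.2 (Nat.two_dvd_ne_zero.1 hi))), mul_zero]

/-- **Lemma `normh`.** If `g₁, …, g_k` are independent symmetric `{-1,0,1}`-valued random
variables with `∫ |gᵢ| = μᵢ` and `h = ∑ᵢ gᵢ`, then `‖h‖_{2m}^{2m} = H_m(μ₁, …, μ_k)` for
every `1 ≤ m ≤ k`. -/
theorem norm_sum_three_valued (k : ℕ) (hk : 1 ≤ k)
    (μvec : Fin k → ℝ) (g : Fin k → ℝ → ℝ)
    (hmeas : ∀ i, Measurable (g i))
    (hval : ∀ i x, g i x ∈ ({-1, 0, 1} : Set ℝ))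
    (hindep : iIndepFun g mu01)
    (hsymm : ∀ i, mu01.map (g i) = mu01.map (fun x => - g i x))
    (habs : ∀ i, ∫ x, |g i x| ∂mu01 = μvec i)
    (m : ℕ) (hm1 : 1 ≤ m) (hmk : m ≤ k) :
    ∫ x, (∑ i, g i x) ^ (2 * m) ∂mu01 = Hpoly k m μvec :=
  norm_sum_three_valued_general k μvec g hmeas hval hindep hsymm habs m
end

section
/- Let $k \ge 1$ and for $j \in \mathbb{N}$ let $F^{(j)} : \mathbb{R}^{k+1} \to \mathbb{R}^k$ be the map with components $F^{(j)}_m$, $m = 1, \dots, k$. If $\mu_1 > \mu_2 > \cdots > \mu_k > 0$, then for every $j \in \mathbb{N}$ the derivative (Jacobian matrix) of $F^{(j)}$ at the point $(\mu_1, \dots, \mu_k, 0)$ has rank $k$, i.e., is surjective as a linear map $\mathbb{R}^{k+1} \to \mathbb{R}^k$. -/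
open Finset

/-- `F^{(j)}_m(μ₁,…,μ_k, ν) = H_m(μ) + ν ∑_{l=1}^m (2m choose 2l) j^{2l} H_{m-l}(μ)`. -/
def Fpoly (k j m : ℕ) (μ : Fin k → ℝ) (ν : ℝ) : ℝ :=
  Hpoly k m μ +
    ν * ∑ l ∈ Finset.Icc 1 m, ((2 * m).choose (2 * l) : ℝ) * (j : ℝ) ^ (2 * l) *
      Hpoly k (m - l) μ

/-- The map `F^{(j)} : ℝ^{k+1} → ℝ^k` with components `F^{(j)}_m`, `m = 1, …, k`. -/
def Fmap (k j : ℕ) : (Fin k → ℝ) × ℝ → (Fin k → ℝ) :=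
  fun z m => Fpoly k j (m.1 + 1) z.1 z.2

/-!
At `ν = 0` the map restricted to the `μ`-slice is `(H₁, …, H_k)`, so it suffices that the
Jacobian of `μ ↦ (H₁(μ), …, H_k(μ))` is injective. Writing `H_m = ∑_α C_{m,α} e_α(μ)`, the
row `∂H_m/∂μᵢ = ∑_{β<m} C_{m,β+1} e_β(μ without μᵢ)` is a lower-triangular combination, with
diagonal `C_{m,m} > 0`, of the rows `e_β(μ without μᵢ)`, `β < k`. Dividing `∏_l (1 + μ_l t)` by
`1 + μᵢ t` gives `e_β(μ without μᵢ) = ∑_{r ≤ β} (-μᵢ)^r e_{β-r}(μ)`, again triangular with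
diagonal `±1` in the powers `μᵢ^r`. So the kernel is that of the Vandermonde matrix `(μᵢ^r)`,
which is trivial because the `μᵢ` are distinct.
-/

namespace Multiset

variable {R : Type*} [CommRing R]

theorem esymm_cons_succ (a : R) (s : Multiset R) (n : ℕ) :
    (a ::ₘ s).esymm (n + 1) = s.esymm (n + 1) + a * s.esymm n := by
  simp [esymm, map_map, sum_map_mul_left]

theorem esymm_eq_sum_neg_pow_mul_esymm_cons (a : R) (s : Multiset R) (n : ℕ) :
    s.esymm n = ∑ r ∈ Finset.range (n + 1), (-a) ^ r * (a ::ₘ s).esymm (n - r) := by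
  induction n with
  | zero => simp [esymm]
  | succ n ih =>
    simp only [Finset.sum_range_succ', Nat.add_sub_add_right, Nat.sub_zero, pow_zero, one_mul,
      pow_succ', esymm_cons_succ, ih, mul_assoc, ← Finset.mul_sum]
    ring

end Multiset

theorem Finset.map_univ_val_eq_cons_erase {ι α : Type*} [Fintype ι] [DecidableEq ι]
    (f : ι → α) (i : ι) : univ.val.map f = f i ::ₘ (univ.erase i).val.map f := by
  rw [← Multiset.map_cons, erase_val, Multiset.cons_erase (mem_univ_val i)]

theorem Finset.sum_powersetCard_succ_sum_erase {ι M : Type*} [DecidableEq ι] [AddCommMonoid M]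
    (s : Finset ι) (n : ℕ) (g : ι → Finset ι → M) :
    ∑ S ∈ s.powersetCard (n + 1), ∑ i ∈ S, g i (S.erase i)
      = ∑ i ∈ s, ∑ t ∈ (s.erase i).powersetCard n, g i t := by
  rw [sum_comm' (t' := s) (s' := fun i => (s.powersetCard (n + 1)).filter (i ∈ ·))]
  · refine sum_congr rfl fun i hi => ?_
    refine sum_nbij' (·.erase i) (insert i) ?_ ?_ ?_ ?_ fun S _ => rfl
    · intro S hS
      simp only [mem_filter, mem_powersetCard] at hS ⊢
      exact ⟨erase_subset_erase i hS.1.1,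
        by rw [card_erase_of_mem hS.2, hS.1.2, Nat.add_sub_cancel]⟩
    · intro t ht
      simp only [mem_filter, mem_powersetCard] at ht ⊢
      have hit : i ∉ t := fun h => by simpa using ht.1 h
      exact ⟨⟨insert_subset hi (ht.1.trans (erase_subset i s)),
        by rw [card_insert_of_notMem hit, ht.2]⟩, mem_insert_self i t⟩
    · intro S hS
      simp only [mem_filter] at hS
      exact insert_erase hS.2
    · intro t ht
      simp only [mem_powersetCard] at ht
      exact erase_insert fun h => by simpa using ht.1 h
  · intro S i
    simp only [mem_powersetCard, mem_filter]
    exact ⟨fun h => ⟨⟨h.1, h.2⟩, h.1.1 h.2⟩, fun h => ⟨h.1.1, h.1.2⟩⟩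

theorem eq_zero_of_forall_sum_range_succ_mul_eq_zero {R : Type*} [Ring R] [NoZeroDivisors R]
    {N : ℕ} {a : ℕ → ℕ → R} {x : ℕ → R} (hdiag : ∀ n < N, a n n ≠ 0)
    (h : ∀ n < N, ∑ b ∈ range (n + 1), a n b * x b = 0) : ∀ n < N, x n = 0 := by
  intro n
  induction n using Nat.strong_induction_on with
  | _ n ih =>
    intro hn
    have hlower : ∑ b ∈ range n, a n b * x b = 0 :=
      sum_eq_zero fun b hb => by rw [ih b (mem_range.1 hb) ((mem_range.1 hb).trans hn), mul_zero]
    have := h n hn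
    rw [sum_range_succ, hlower, zero_add] at this
    exact (mul_eq_zero.1 this).resolve_left (hdiag n hn)

theorem hasFDerivAt_esymm_succ {𝕜 ι : Type*} [NontriviallyNormedField 𝕜] [Fintype ι]
    [DecidableEq ι] (n : ℕ) (x : ι → 𝕜) :
    HasFDerivAt (fun y : ι → 𝕜 => (univ.val.map y).esymm (n + 1))
      (∑ i, ((univ.erase i).val.map x).esymm n •
        (ContinuousLinearMap.proj i : (ι → 𝕜) →L[𝕜] 𝕜)) x := by
  simp only [esymm_map_val]
  refine (HasFDerivAt.fun_sum (u := univ.powersetCard (n + 1))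
    fun t _ => hasFDerivAt_finsetProd (𝕜 := 𝕜) (u := t) (x := x)).congr_fderiv ?_
  rw [sum_powersetCard_succ_sum_erase _ _ fun i t => (∏ j ∈ t, x j) • ContinuousLinearMap.proj i]
  exact sum_congr rfl fun i _ => sum_smul.symm

theorem Hpoly_eq_sum_esymm (k m : ℕ) (μ : Fin k → ℝ) :
    Hpoly k m μ = ∑ α ∈ range (m + 1), (Ccoef m α : ℝ) * (univ.val.map μ).esymm α := by
  simp only [Hpoly, esymm_map_val, mul_sum]

noncomputable def dHpoly (k m : ℕ) (μ : Fin k → ℝ) : (Fin k → ℝ) →L[ℝ] ℝ :=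
  ∑ β ∈ range m, (Ccoef m (β + 1) : ℝ) •
    ∑ i, ((univ.erase i).val.map μ).esymm β • ContinuousLinearMap.proj i

theorem dHpoly_apply (k m : ℕ) (μ δ : Fin k → ℝ) :
    dHpoly k m μ δ = ∑ β ∈ range m, (Ccoef m (β + 1) : ℝ) *
      ∑ i, δ i * ((univ.erase i).val.map μ).esymm β := by
  simp [dHpoly, mul_comm]

theorem hasFDerivAt_Hpoly (k m : ℕ) (μ : Fin k → ℝ) :
    HasFDerivAt (Hpoly k m) (dHpoly k m μ) μ := by
  have hH : Hpoly k m = fun x => ∑ β ∈ range m, (Ccoef m (β + 1) : ℝ) *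
      (univ.val.map x).esymm (β + 1) + (Ccoef m 0 : ℝ) := by
    ext x
    simp [Hpoly_eq_sum_esymm, sum_range_succ', Multiset.esymm]
  rw [hH]
  exact (HasFDerivAt.fun_sum fun β _ => (hasFDerivAt_esymm_succ β μ).const_mul _).add_const _

theorem Ccoef_self_pos (m : ℕ) : 0 < Ccoef m m := by
  refine sum_pos (fun c _ => Nat.multinomial_pos _ _) ⟨fun _ => 1, ?_⟩
  rw [mem_filter]
  exact ⟨Nat.mem_antidiagonalTuple.2 (by simp), fun _ => le_rfl⟩

theorem injective_pi_dHpoly (k : ℕ) (μ : Fin k → ℝ) (hμ : Function.Injective μ) :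
    Function.Injective (ContinuousLinearMap.pi fun m : Fin k => dHpoly k (m + 1) μ) := by
  rw [injective_iff_map_eq_zero]
  intro δ hδ
  set e : ℕ → ℝ := (univ.val.map μ).esymm
  set u : ℕ → ℝ := fun β => ∑ i, δ i * ((univ.erase i).val.map μ).esymm β
  set p : ℕ → ℝ := fun r => ∑ i, δ i * μ i ^ r
  have hu : ∀ β < k, u β = 0 := by
    refine eq_zero_of_forall_sum_range_succ_mul_eq_zero
      (a := fun n b => (Ccoef (n + 1) (b + 1) : ℝ))
      (fun n _ => by exact_mod_cast (Ccoef_self_pos _).ne') fun n hn => ?_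
    simpa only [ContinuousLinearMap.pi_apply, dHpoly_apply, Pi.zero_apply]
      using congrFun hδ ⟨n, hn⟩
  have hu_eq : ∀ n, u n = ∑ r ∈ range (n + 1), (-1) ^ r * e (n - r) * p r := by
    intro n
    simp only [u, p, e, mul_sum]
    rw [sum_comm]
    refine sum_congr rfl fun i _ => ?_
    rw [Multiset.esymm_eq_sum_neg_pow_mul_esymm_cons (μ i), ← map_univ_val_eq_cons_erase, mul_sum]
    refine sum_congr rfl fun r _ => ?_
    rw [neg_pow]
    ring
  have hp : ∀ r < k, p r = 0 :=
    eq_zero_of_forall_sum_range_succ_mul_eq_zero (a := fun n r => (-1) ^ r * e (n - r))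
      (fun n _ => by simp [e, Multiset.esymm]) fun n hn => (hu_eq n).symm.trans (hu n hn)
  exact Matrix.eq_zero_of_forall_pow_sum_mul_pow_eq_zero hμ fun r => hp r r.2

theorem differentiable_Fmap (k j : ℕ) : Differentiable ℝ (Fmap k j) := by
  have hH : ∀ m, Differentiable ℝ (Hpoly k m) := fun m μ =>
    (hasFDerivAt_Hpoly k m μ).differentiableAt
  refine differentiable_pi.2 fun m => ?_
  simp only [Fmap, Fpoly]
  fun_prop

theorem rank_Fmap_at_nu_zero_general (k : ℕ) (j : ℕ)
    (μ : Fin k → ℝ)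
    (hdec : ∀ i i' : Fin k, i < i' → μ i' < μ i) :
    ∃ D : ((Fin k → ℝ) × ℝ) →L[ℝ] (Fin k → ℝ),
      HasFDerivAt (Fmap k j) D (μ, 0) ∧ Function.Surjective D := by
  have hF := (differentiable_Fmap k j (μ, 0)).hasFDerivAt
  refine ⟨_, hF, ?_⟩
  have hslice : (fun x => Fmap k j (x, 0)) = fun x (m : Fin k) => Hpoly k (m + 1) x := by
    ext x m
    simp [Fmap, Fpoly]
  have hD : (fderiv ℝ (Fmap k j) (μ, 0)).comp (ContinuousLinearMap.inl ℝ _ ℝ) =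
      ContinuousLinearMap.pi fun m : Fin k => dHpoly k (m + 1) μ := by
    refine (hF.comp μ (hasFDerivAt_prodMk_left μ 0)).unique ?_
    rw [Function.comp_def, hslice]
    exact hasFDerivAt_pi'.2 fun m => hasFDerivAt_Hpoly k (m + 1) μ
  have hsurj := LinearMap.injective_iff_surjective.1
    (injective_pi_dHpoly k μ (StrictAnti.injective fun a b => hdec a b))
  intro y
  obtain ⟨δ, rfl⟩ := hsurj y
  exact ⟨(δ, 0), by rw [← hD]; rfl⟩

/-- **Lemma `rank`.** If `μ₁ > μ₂ > ⋯ > μ_k > 0`, then for every `j` the derivative of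
`F^{(j)} : ℝ^{k+1} → ℝ^k` at the point `(μ₁, …, μ_k, 0)` has rank `k`, i.e. it is
surjective as a linear map `ℝ^{k+1} → ℝ^k`. -/
theorem rank_Fmap_at_nu_zero (k : ℕ) (hk : 1 ≤ k) (j : ℕ) (hj : 1 ≤ j)
    (μ : Fin k → ℝ)
    (hdec : ∀ i i' : Fin k, i < i' → μ i' < μ i) (hpos : ∀ i, 0 < μ i) :
    ∃ D : ((Fin k → ℝ) × ℝ) →L[ℝ] (Fin k → ℝ),
      HasFDerivAt (Fmap k j) D (μ, 0) ∧ Function.Surjective D :=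
  rank_Fmap_at_nu_zero_general k j μ hdec
end

section
/- Let $k \ge 1$, $p = 2k$, and let $q$ be the conjugate exponent, $\frac{1}{p} + \frac{1}{q} = 1$. Suppose $1 > \overline{\mu}_1 > \overline{\mu}_2 > \cdots > \overline{\mu}_k > 0$, and for each $j \in \mathbb{N}$ let $g_{j,1}, \dots, g_{j,k}$ be independent symmetric random variables on $[0,1]$ taking only the values $-1, 0, 1$ with $\int |g_{j,i}| = \overline{\mu}_i$, and set $h_j = \sum_{i=1}^k g_{j,i}$. Then, with $C_k = \sum_{\alpha=1}^{k} \binom{k}{\alpha} C_{k,\alpha}$, one has $\|h_j\|_p \cdot \|h_j\|_q \le C_k^{1/p}\, \|h_j\|_2^2$ for all $j \in \mathbb{N}$; in particular there is a constant $C = C(p)$, independent of $j$, with $\|h_j\|_p \cdot \|h_j\|_q \le C\, \|h_j\|_2^2$ for all $j$. -/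
/-!
The sum `h = ∑ i, g i` of the ternary variables is integer-valued, so `|h| ^ q ≤ |h| ^ 2`
pointwise for `q ≤ 2`. Independence and symmetry give `E h² = ∑ E |gᵢ|`, and in the multinomial
expansion of `E h^(2k)` only the exponent vectors with all entries even survive; each of them
contributes at most `∑ E |gᵢ|` because `|gᵢ| ≤ 1`, and their multinomial coefficients add up to
`C_k` (group them by their support). Hence `‖h‖_p^p ≤ C_k ‖h‖_2²` and `‖h‖_q^q ≤ ‖h‖_2²`, which
combine to the claim since `1/p + 1/q = 1`.
-/

open MeasureTheory ProbabilityTheory Finset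
open scoped ENNReal NNReal

open Function

@[to_additive]
lemma Fintype.prod_extend_one {ι κ M : Type*} [Fintype ι] [Fintype κ] [CommMonoid M]
    {σ : κ → ι} (hσ : Injective σ) (c : κ → M) :
    ∏ i, extend σ c 1 i = ∏ j, c j := by
  classical
  calc ∏ i, extend σ c 1 i = ∏ i ∈ univ.image σ, extend σ c 1 i :=
        (Finset.prod_subset (subset_univ _) fun i _ hi ↦
          extend_apply' c (1 : ι → M) i (by simpa using hi)).symm
    _ = ∏ j, c j := by simp [prod_image hσ.injOn, hσ.extend_apply]

lemma Nat.multinomial_univ_extend {ι κ : Type*} [Fintype ι] [Fintype κ]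
    {σ : κ → ι} (hσ : Injective σ) (f : κ → ℕ) :
    Nat.multinomial univ (extend σ f 0) = Nat.multinomial univ f := by
  have h1 : (Nat.factorial ∘ (0 : ι → ℕ)) = 1 := by ext; simp
  simp only [Nat.multinomial, Fintype.sum_extend_zero hσ, apply_extend Nat.factorial, h1,
    Fintype.prod_extend_one hσ]
  rfl

lemma Ccoef_zero_right {n : ℕ} (hn : n ≠ 0) : Ccoef n 0 = 0 := by
  obtain ⟨m, rfl⟩ := Nat.exists_eq_succ_of_ne_zero hn
  simp [Ccoef, Finset.Nat.antidiagonalTuple_zero_succ]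

lemma extend_comp_eq_self {ι κ M : Type*} [Zero M] (σ : κ ↪ ι) {e : ι → M}
    (he : support e ⊆ Set.range σ) : extend σ (e ∘ σ) 0 = e := by
  ext i
  by_cases hi : i ∈ Set.range σ
  · obtain ⟨j, rfl⟩ := hi
    exact σ.injective.extend_apply _ _ _
  · rw [extend_apply' _ _ _ hi]
    exact (notMem_support.mp fun h ↦ hi (he h)).symm

lemma sum_multinomial_two_mul_filter_support_eq_Ccoef {ι : Type*} [Fintype ι] [DecidableEq ι]
    {m : ℕ} (σ : Fin m ↪ ι) (n : ℕ) :
    ∑ e ∈ piAntidiag univ n with univ.filter (e · ≠ 0) = univ.map σ,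
      Nat.multinomial univ (fun i ↦ 2 * e i) = Ccoef n m := by
  have hext : ∀ e : ι → ℕ, univ.filter (e · ≠ 0) = univ.map σ → extend σ (e ∘ σ) 0 = e :=
    fun e he ↦ extend_comp_eq_self σ fun i hi ↦ by
      simpa [he] using (mem_filter (p := (e · ≠ 0))).mpr ⟨mem_univ i, mem_support.mp hi⟩
  have hsupp : ∀ c : Fin m → ℕ, (∀ j, 1 ≤ c j) →
      univ.filter (extend σ c 0 · ≠ 0) = univ.map σ := by
    intro c hc
    ext i
    by_cases hi : ∃ j, σ j = i
    · obtain ⟨j, rfl⟩ := hi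
      simp [σ.injective.extend_apply, Nat.one_le_iff_ne_zero.mp (hc j)]
    · simp_all [extend_apply']
  symm
  refine sum_nbij' (fun c ↦ extend σ c 0) (fun e ↦ e ∘ σ) ?_ ?_ ?_ ?_ ?_
  · intro c hc
    simp only [mem_filter, Finset.Nat.mem_antidiagonalTuple] at hc ⊢
    exact ⟨by simp [Fintype.sum_extend_zero σ.injective, hc.1], hsupp c hc.2⟩
  · intro e he
    simp only [mem_filter, mem_piAntidiag] at he
    simp only [mem_filter, Finset.Nat.mem_antidiagonalTuple]
    refine ⟨by rw [← Fintype.sum_extend_zero σ.injective, hext e he.2, he.1.1], fun j ↦ ?_⟩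
    have : σ j ∈ univ.filter (e · ≠ 0) := by simp [he.2]
    simpa [Nat.one_le_iff_ne_zero] using this
  · intro c _
    exact extend_comp σ.injective _ _
  · intro e he
    exact hext e (mem_filter.mp he).2
  · intro c _
    have : (fun i ↦ 2 * extend σ c 0 i) = extend σ (fun j ↦ 2 * c j) 0 := by
      ext i; rw [apply_extend (2 * ·)]; rfl
    rw [this, Nat.multinomial_univ_extend σ.injective]

lemma sum_multinomial_two_mul_eq_sum_choose_mul_Ccoef {ι : Type*} [Fintype ι] [LinearOrder ι]
    {n : ℕ} (hn : n ≠ 0) :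
    ∑ e ∈ piAntidiag (univ : Finset ι) n, Nat.multinomial univ (fun i ↦ 2 * e i)
      = ∑ α ∈ Icc 1 (Fintype.card ι), (Fintype.card ι).choose α * Ccoef n α := by
  rw [← sum_fiberwise_of_maps_to (t := (univ : Finset ι).powerset)
    (g := fun e : ι → ℕ ↦ univ.filter (e · ≠ 0)) fun e _ ↦ mem_powerset.mpr (subset_univ _)]
  calc _ = ∑ S ∈ (univ : Finset ι).powerset, Ccoef n #S := by
        refine sum_congr rfl fun S _ ↦ ?_
        simpa [S.map_orderEmbOfFin_univ rfl] using
          sum_multinomial_two_mul_filter_support_eq_Ccoef (S.orderEmbOfFin rfl).toEmbedding n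
    _ = _ := by
        rw [sum_powerset_apply_card, card_univ]
        refine sum_subset (fun α hα ↦ ?_) (fun α hα hα' ↦ ?_) |>.symm
        · simp at hα ⊢; omega
        · obtain rfl : α = 0 := by simp at hα hα'; omega
          simp [Ccoef_zero_right hn]

lemma abs_le_one_of_mem_ternary {x : ℝ} (hx : x ∈ ({-1, 0, 1} : Set ℝ)) : |x| ≤ 1 := by
  rcases hx with rfl | rfl | rfl <;> simp

lemma pow_eq_abs_of_mem_ternary {x : ℝ} (hx : x ∈ ({-1, 0, 1} : Set ℝ)) {d : ℕ} (hd : Even d)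
    (hd0 : d ≠ 0) : x ^ d = |x| := by
  rcases hx with rfl | rfl | rfl <;> simp [hd.neg_one_pow, hd0]

lemma abs_sum_rpow_le_of_ternary {ι : Type*} [Fintype ι] {x : ι → ℝ}
    (hx : ∀ i, x i ∈ ({-1, 0, 1} : Set ℝ)) {q r : ℝ} (hq : 0 < q) (hqr : q ≤ r) :
    |∑ i, x i| ^ q ≤ |∑ i, x i| ^ r := by
  obtain ⟨m, hm⟩ : ∃ m : ℤ, ∑ i, x i = m := by
    have (i : ι) : ∃ m : ℤ, x i = m := by
      obtain h | h | h : x i = -1 ∨ x i = 0 ∨ x i = 1 := hx i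
      exacts [⟨-1, by simp [h]⟩, ⟨0, by simp [h]⟩, ⟨1, by simp [h]⟩]
    choose m hm using this
    exact ⟨∑ i, m i, by simp [hm]⟩
  rw [hm]
  rcases eq_or_ne m 0 with rfl | hm0
  · simp [Real.zero_rpow hq.ne', Real.zero_rpow (hq.trans_le hqr).ne']
  · refine Real.rpow_le_rpow_of_exponent_le ?_ hqr
    rw [← Int.cast_abs]
    exact_mod_cast Int.one_le_abs hm0

section Moments

variable {Ω : Type*} [MeasurableSpace Ω] {μ : Measure Ω}

lemma integral_pow_eq_zero_of_odd {X : Ω → ℝ} (hX : AEMeasurable X μ)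
    (hsymm : μ.map X = μ.map (fun ω ↦ -X ω)) {d : ℕ} (hd : Odd d) :
    ∫ ω, X ω ^ d ∂μ = 0 := by
  have h : ∫ ω, X ω ^ d ∂μ = ∫ ω, (-X ω) ^ d ∂μ := by
    rw [← integral_map (f := (· ^ d)) hX (by fun_prop), hsymm,
      integral_map (φ := fun ω ↦ -X ω) hX.neg (by fun_prop)]
  simp only [hd.neg_pow, integral_neg] at h
  linarith

variable [IsProbabilityMeasure μ]

lemma integral_le_one_of_abs_le_one {f : Ω → ℝ} (hf : ∀ ω, |f ω| ≤ 1) : ∫ ω, f ω ∂μ ≤ 1 := by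
  have := norm_integral_le_of_norm_le_const (μ := μ) (f := f) (C := 1)
    (.of_forall fun ω ↦ by simpa using hf ω)
  simp only [Real.norm_eq_abs, probReal_univ, mul_one] at this
  exact (le_abs_self _).trans this

lemma integral_sum_pow_eq_sum_multinomial_mul_prod {ι : Type*} [Fintype ι] [DecidableEq ι]
    {X : ι → Ω → ℝ} (hind : iIndepFun X μ) (hmeas : ∀ i, AEMeasurable (X i) μ) {C : ℝ}
    (hbound : ∀ i ω, |X i ω| ≤ C) (n : ℕ) :
    ∫ ω, (∑ i, X i ω) ^ n ∂μ
      = ∑ d ∈ piAntidiag univ n, Nat.multinomial univ d * ∏ i, ∫ ω, X i ω ^ d i ∂μ := by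
  have hint : ∀ d : ι → ℕ, Integrable (fun ω ↦ ∏ i, X i ω ^ d i) μ := fun d ↦
    .of_bound (by fun_prop) (∏ i, C ^ d i) <| .of_forall fun ω ↦ by
      simpa [abs_prod] using prod_le_prod (fun i _ ↦ by positivity)
        fun i _ ↦ pow_le_pow_left₀ (abs_nonneg _) (hbound i ω) (d i)
  simp_rw [sum_pow_eq_sum_piAntidiag]
  rw [integral_finsetSum _ fun d _ ↦ (hint d).const_mul _]
  refine sum_congr rfl fun d _ ↦ ?_
  rw [integral_const_mul, hind.integral_fun_prod_comp (f := fun i y ↦ y ^ d i) hmeas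
    fun i ↦ by fun_prop]

lemma integral_sum_sq_eq_sum_integral_sq {ι : Type*} [Fintype ι] {X : ι → Ω → ℝ}
    (hind : iIndepFun X μ) (hL2 : ∀ i, MemLp (X i) 2 μ) (hmean : ∀ i, ∫ ω, X i ω ∂μ = 0) :
    ∫ ω, (∑ i, X i ω) ^ 2 ∂μ = ∑ i, ∫ ω, X i ω ^ 2 ∂μ := by
  have hsum : ∫ ω, ∑ i, X i ω ∂μ = 0 := by
    simp [integral_finsetSum _ fun i _ ↦ (hL2 i).integrable one_le_two, hmean]
  have hX : (fun ω ↦ ∑ i, X i ω) = ∑ i, X i := by ext; simp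
  rw [← variance_of_integral_eq_zero
    (Finset.aemeasurable_fun_sum _ fun i _ ↦ (hL2 i).aemeasurable) hsum, hX,
    IndepFun.variance_sum (fun i _ ↦ hL2 i) fun i _ j _ hij ↦ hind.indepFun hij]
  exact sum_congr rfl fun i _ ↦ variance_of_integral_eq_zero (hL2 i).aemeasurable (hmean i)

end Moments

section Ternary

variable {Ω ι : Type*} [MeasurableSpace Ω] {μ : Measure Ω} [IsProbabilityMeasure μ] [Fintype ι]
  {X : ι → Ω → ℝ}

lemma prod_integral_pow_le_of_ternary (hmeas : ∀ i, AEMeasurable (X i) μ)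
    (hval : ∀ i ω, X i ω ∈ ({-1, 0, 1} : Set ℝ))
    (hsymm : ∀ i, μ.map (X i) = μ.map (fun ω ↦ -X i ω)) {d : ι → ℕ} (hd : d ≠ 0) :
    ∏ i, ∫ ω, X i ω ^ d i ∂μ ≤ if ∀ i, 2 ∣ d i then ∑ i, ∫ ω, |X i ω| ∂μ else 0 := by
  classical
  split_ifs with heven
  · obtain ⟨i₀, hi₀⟩ : ∃ i, d i ≠ 0 := Function.ne_iff.mp hd
    have h0 : ∀ i, 0 ≤ ∫ ω, X i ω ^ d i ∂μ := fun i ↦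
      integral_nonneg fun ω ↦ (even_iff_two_dvd.mpr (heven i)).pow_nonneg _
    have h1 : ∀ i, ∫ ω, X i ω ^ d i ∂μ ≤ 1 := fun i ↦ integral_le_one_of_abs_le_one fun ω ↦ by
      rw [abs_pow]; exact pow_le_one₀ (abs_nonneg _) (abs_le_one_of_mem_ternary (hval i ω))
    calc ∏ i, ∫ ω, X i ω ^ d i ∂μ ≤ ∫ ω, X i₀ ω ^ d i₀ ∂μ := by
          rw [← mul_prod_erase univ _ (mem_univ i₀)]
          exact mul_le_of_le_one_right (h0 i₀) (prod_le_one (fun i _ ↦ h0 i) fun i _ ↦ h1 i)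
      _ = ∫ ω, |X i₀ ω| ∂μ := integral_congr_ae <| .of_forall fun ω ↦
          pow_eq_abs_of_mem_ternary (hval i₀ ω) (even_iff_two_dvd.mpr (heven i₀)) hi₀
      _ ≤ ∑ i, ∫ ω, |X i ω| ∂μ :=
          single_le_sum (f := fun i ↦ ∫ ω, |X i ω| ∂μ)
            (fun i _ ↦ integral_nonneg fun ω ↦ abs_nonneg _) (mem_univ i₀)
  · push Not at heven
    obtain ⟨i₀, hi₀⟩ := heven
    exact (prod_eq_zero (mem_univ i₀) (integral_pow_eq_zero_of_odd (hmeas i₀) (hsymm i₀)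
      (Nat.odd_iff.mpr (Nat.two_dvd_ne_zero.mp hi₀)))).le

lemma integral_sum_pow_two_mul_le_of_ternary [DecidableEq ι] (hind : iIndepFun X μ)
    (hmeas : ∀ i, AEMeasurable (X i) μ) (hval : ∀ i ω, X i ω ∈ ({-1, 0, 1} : Set ℝ))
    (hsymm : ∀ i, μ.map (X i) = μ.map (fun ω ↦ -X i ω)) {n : ℕ} (hn : n ≠ 0) :
    ∫ ω, (∑ i, X i ω) ^ (2 * n) ∂μ
      ≤ (∑ e ∈ piAntidiag (univ : Finset ι) n, Nat.multinomial univ (fun i ↦ 2 * e i))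
        * ∑ i, ∫ ω, |X i ω| ∂μ := by
  rw [integral_sum_pow_eq_sum_multinomial_mul_prod hind hmeas
    fun i ω ↦ abs_le_one_of_mem_ternary (hval i ω)]
  calc _ ≤ ∑ d ∈ piAntidiag univ (2 * n), (Nat.multinomial univ d : ℝ)
          * if ∀ i, 2 ∣ d i then ∑ i, ∫ ω, |X i ω| ∂μ else 0 := by
        refine sum_le_sum fun d hd ↦ mul_le_mul_of_nonneg_left
          (prod_integral_pow_le_of_ternary hmeas hval hsymm ?_) (Nat.cast_nonneg _)
        rintro rfl
        simp [hn] at hd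
    _ = (∑ d ∈ piAntidiag (univ : Finset ι) (2 * n) with ∀ i, 2 ∣ d i,
          (Nat.multinomial univ d : ℝ)) * ∑ i, ∫ ω, |X i ω| ∂μ := by
        rw [sum_mul, sum_filter]
        simp_rw [mul_ite, mul_zero]
    _ = _ := by
        rw [← map_nsmul_piAntidiag_univ n two_ne_zero, sum_map]
        push_cast
        rfl

lemma integral_sum_sq_eq_sum_integral_abs_of_ternary (hind : iIndepFun X μ)
    (hmeas : ∀ i, AEMeasurable (X i) μ) (hval : ∀ i ω, X i ω ∈ ({-1, 0, 1} : Set ℝ))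
    (hsymm : ∀ i, μ.map (X i) = μ.map (fun ω ↦ -X i ω)) :
    ∫ ω, (∑ i, X i ω) ^ 2 ∂μ = ∑ i, ∫ ω, |X i ω| ∂μ := by
  rw [integral_sum_sq_eq_sum_integral_sq hind
    (fun i ↦ .of_bound (hmeas i).aestronglyMeasurable 1 <| .of_forall fun ω ↦ by
      simpa using abs_le_one_of_mem_ternary (hval i ω))
    fun i ↦ by simpa using integral_pow_eq_zero_of_odd (hmeas i) (hsymm i) odd_one]
  exact sum_congr rfl fun i _ ↦ integral_congr_ae <| .of_forall fun ω ↦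
    pow_eq_abs_of_mem_ternary (hval i ω) even_two two_ne_zero

lemma integral_abs_sum_rpow_le_of_ternary (hmeas : ∀ i, AEMeasurable (X i) μ)
    (hval : ∀ i ω, X i ω ∈ ({-1, 0, 1} : Set ℝ)) {q r : ℝ} (hq : 0 < q) (hqr : q ≤ r) :
    ∫ ω, |∑ i, X i ω| ^ q ∂μ ≤ ∫ ω, |∑ i, X i ω| ^ r ∂μ := by
  refine integral_mono_of_nonneg (.of_forall fun _ ↦ by positivity) ?_
    (.of_forall fun ω ↦ abs_sum_rpow_le_of_ternary (hval · ω) hq hqr)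
  have hr : 0 ≤ r := hq.le.trans hqr
  refine .of_bound (by fun_prop (disch := assumption)) (Fintype.card ι ^ r)
    (.of_forall fun ω ↦ ?_)
  have : |∑ i, X i ω| ≤ Fintype.card ι := (abs_sum_le_sum_abs _ _).trans <|
    (sum_le_sum fun i _ ↦ abs_le_one_of_mem_ternary (hval i ω)).trans (by simp)
  rw [Real.norm_eq_abs, abs_of_nonneg (by positivity)]
  exact Real.rpow_le_rpow (abs_nonneg _) this hr

end Ternary

lemma rpow_mul_rpow_le_of_le_mul {A B D c a b : ℝ} (hA : 0 ≤ A) (hB : 0 ≤ B) (hc : 0 ≤ c)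
    (ha : 0 ≤ a) (hb : 0 ≤ b) (hab : a + b = 1) (hAD : A ≤ c * D) (hBD : B ≤ D) :
    A ^ a * B ^ b ≤ c ^ a * D := by
  have hD := hB.trans hBD
  calc A ^ a * B ^ b ≤ (c * D) ^ a * D ^ b := by gcongr
    _ = c ^ a * D := by
      rw [Real.mul_rpow hc hD, mul_assoc, ← Real.rpow_add' hD (by simp [hab]), hab, Real.rpow_one]

instance : IsProbabilityMeasure mu01 :=
  ⟨by simp [mu01]⟩

theorem norm_p_mul_norm_q_le_general (k : ℕ) (hk : 1 ≤ k) (p q : ℝ) (hp : p = 2 * k)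
    (hpq : 1 / p + 1 / q = 1)
    (g : ℕ → Fin k → ℝ → ℝ)
    (hmeas : ∀ j i, Measurable (g j i))
    (hval : ∀ j i x, g j i x ∈ ({-1, 0, 1} : Set ℝ))
    (hindep : ∀ j, iIndepFun (g j) mu01)
    (hsymm : ∀ j i, mu01.map (g j i) = mu01.map (fun x => - g j i x)) :
    (∀ j : ℕ,
      (∫ x, |∑ i, g j i x| ^ p ∂mu01) ^ (1 / p) * (∫ x, |∑ i, g j i x| ^ q ∂mu01) ^ (1 / q)
        ≤ (∑ α ∈ Finset.Icc 1 k, (k.choose α : ℝ) * (Ccoef k α : ℝ)) ^ (1 / p)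
            * (∫ x, |∑ i, g j i x| ^ (2 : ℝ) ∂mu01)) ∧
    ∃ C : ℝ, ∀ j : ℕ,
      (∫ x, |∑ i, g j i x| ^ p ∂mu01) ^ (1 / p) * (∫ x, |∑ i, g j i x| ^ q ∂mu01) ^ (1 / q)
        ≤ C * (∫ x, |∑ i, g j i x| ^ (2 : ℝ) ∂mu01) := by
  have hp2 : 2 ≤ p := by
    have : (1 : ℝ) ≤ k := by exact_mod_cast hk
    linarith
  have hq_inv : 1 / 2 ≤ 1 / q := by linarith [one_div_le_one_div_of_le two_pos hp2]
  have hq0 : 0 < q := one_div_pos.mp (by linarith)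
  have hq2 : q ≤ 2 := (one_div_le_one_div two_pos hq0).mp hq_inv
  have hpow : ∀ x : ℝ, |x| ^ p = x ^ (2 * k) := fun x ↦ by
    rw [hp, show (2 * k : ℝ) = ((2 * k : ℕ) : ℝ) by push_cast; ring, Real.rpow_natCast,
      (even_two_mul k).pow_abs]
  refine (fun key ↦ ⟨key, _, key⟩) fun j ↦ ?_
  have hmeas' : ∀ i, AEMeasurable (g j i) mu01 := fun i ↦ (hmeas j i).aemeasurable
  have hsq : ∫ x, |∑ i, g j i x| ^ (2 : ℝ) ∂mu01 = ∑ i, ∫ x, |g j i x| ∂mu01 := by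
    simpa only [Real.rpow_two, sq_abs] using
      integral_sum_sq_eq_sum_integral_abs_of_ternary (hindep j) hmeas' (hval j) (hsymm j)
  have hmoment := integral_sum_pow_two_mul_le_of_ternary (hindep j) hmeas' (hval j) (hsymm j)
    (n := k) (by omega)
  rw [sum_multinomial_two_mul_eq_sum_choose_mul_Ccoef (by omega), Fintype.card_fin, ← hsq]
    at hmoment
  refine rpow_mul_rpow_le_of_le_mul (by positivity) (by positivity) (by positivity)
    (by positivity) (by positivity) hpq ?_
    (integral_abs_sum_rpow_le_of_ternary hmeas' (hval j) hq0 hq2)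
  simpa [hpow] using hmoment

/-- **Lemma `vpl`.** For `p = 2k` even with conjugate exponent `q`, if
`h_j = ∑_{i=1}^k g_{j,i}` where the `g_{j,i}` are independent symmetric `{-1,0,1}`-valued
random variables with `∫ |g_{j,i}| = μ̄ᵢ` and `1 > μ̄₁ > ⋯ > μ̄_k > 0`, then with
`C_k = ∑_{α=1}^k (k choose α) C_{k,α}` one has
`‖h_j‖_p ⬝ ‖h_j‖_q ≤ C_k^{1/p} ‖h_j‖_2²` for all `j`; in particular there is a constant
`C = C(p)` independent of `j` with `‖h_j‖_p ⬝ ‖h_j‖_q ≤ C ‖h_j‖_2²` for all `j`. -/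
theorem norm_p_mul_norm_q_le (k : ℕ) (hk : 1 ≤ k) (p q : ℝ) (hp : p = 2 * k)
    (hpq : 1 / p + 1 / q = 1)
    (μbar : Fin k → ℝ)
    (hdec : ∀ i i' : Fin k, i < i' → μbar i' < μbar i)
    (hlt1 : ∀ i, μbar i < 1) (hpos : ∀ i, 0 < μbar i)
    (g : ℕ → Fin k → ℝ → ℝ)
    (hmeas : ∀ j i, Measurable (g j i))
    (hval : ∀ j i x, g j i x ∈ ({-1, 0, 1} : Set ℝ))
    (hindep : ∀ j, iIndepFun (g j) mu01)
    (hsymm : ∀ j i, mu01.map (g j i) = mu01.map (fun x => - g j i x))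
    (habs : ∀ j i, ∫ x, |g j i x| ∂mu01 = μbar i) :
    (∀ j : ℕ,
      (∫ x, |∑ i, g j i x| ^ p ∂mu01) ^ (1 / p) * (∫ x, |∑ i, g j i x| ^ q ∂mu01) ^ (1 / q)
        ≤ (∑ α ∈ Finset.Icc 1 k, (k.choose α : ℝ) * (Ccoef k α : ℝ)) ^ (1 / p)
            * (∫ x, |∑ i, g j i x| ^ (2 : ℝ) ∂mu01)) ∧
    ∃ C : ℝ, ∀ j : ℕ,
      (∫ x, |∑ i, g j i x| ^ p ∂mu01) ^ (1 / p) * (∫ x, |∑ i, g j i x| ^ q ∂mu01) ^ (1 / q)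
        ≤ C * (∫ x, |∑ i, g j i x| ^ (2 : ℝ) ∂mu01) :=
  norm_p_mul_norm_q_le_general k hk p q hp hpq g hmeas hval hindep hsymm
end
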